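/- arXiv:2407.20479 — 2 statements merged into one kernel-verified Lean document; each statement's English description precedes it below -/
import Mathlib

section
/- Intersection distributes over lookaround-sandwiched regexes: for all regexes A₁, A₂, B₁, B₂, E₁, E₂, the regex ((?<=B₁)·E₁·(?=A₁)) & ((?<=B₂)·E₂·(?=A₂)) is semantically equivalent to (?<=B₁)·(?<=B₂)·(E₁&E₂)·(?=A₁)·(?=A₂). -/
/-- Extended regular expressions: predicates, epsilon, anchors, union,
intersection, concatenation, bounded repetition, star, complement, lookarounds. -/
inductive Regex (α : Type) where
  | pred : (α → Bool) → Regex α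
  | eps : Regex α
  | bos : Regex α          -- start anchor \A
  | eos : Regex α          -- end anchor \z
  | union : Regex α → Regex α → Regex α
  | inter : Regex α → Regex α → Regex α
  | cat : Regex α → Regex α → Regex α
  | repn : Regex α → ℕ → Regex α
  | star : Regex α → Regex α
  | compl : Regex α → Regex α
  | la : Regex α → Regex α    -- lookahead (?=R)
  | nla : Regex α → Regex α   -- negative lookahead (?!R)
  | lb : Regex α → Regex α    -- lookbehind (?<=R)
  | nlb : Regex α → Regex α   -- negative lookbehind (?<!R)

/-- m-fold concatenation of a binary span relation. -/
def powMatches (M : ℕ → ℕ → Prop) : ℕ → ℕ → ℕ → Prop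
  | 0, i, j => i = j
  | m+1, i, j => ∃ k, i ≤ k ∧ k ≤ j ∧ M i k ∧ powMatches M m k j

/-- Span-based match semantics: `Matches w R i j` means the span (i,j) of w matches R. -/
def Matches {α : Type} (w : List α) : Regex α → ℕ → ℕ → Prop
  | .pred ψ, i, j => j = i + 1 ∧ ∃ c, w[i]? = some c ∧ ψ c = true
  | .eps, i, j => i = j
  | .bos, i, j => i = j ∧ i = 0
  | .eos, i, j => i = j ∧ j = w.length
  | .union L R, i, j => Matches w L i j ∨ Matches w R i j
  | .inter L R, i, j => Matches w L i j ∧ Matches w R i j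
  | .cat L R, i, j => ∃ k, i ≤ k ∧ k ≤ j ∧ Matches w L i k ∧ Matches w R k j
  | .repn R m, i, j => powMatches (Matches w R) m i j
  | .star R, i, j => ∃ m, powMatches (Matches w R) m i j
  | .compl R, i, j => ¬ Matches w R i j
  | .la R, i, j => i = j ∧ ∃ k, j ≤ k ∧ Matches w R j k
  | .nla R, i, j => i = j ∧ ¬ ∃ k, j ≤ k ∧ Matches w R j k
  | .lb R, i, j => i = j ∧ ∃ k, k ≤ i ∧ Matches w R k i
  | .nlb R, i, j => i = j ∧ ¬ ∃ k, k ≤ i ∧ Matches w R k i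


/-! Lookarounds match only empty spans, so a lookbehind in front of `R` is a test at the left end
of the span and a lookahead behind `R` a test at the right end. Both sides of the equivalence
therefore reduce to the same conjunction: `B₁` and `B₂` hold behind `i`, `E₁` and `E₂` match
`(i, j)`, and `A₁` and `A₂` hold ahead of `j`. -/

namespace Regex

variable {α : Type} {w : List α}

def ZeroWidth (w : List α) (Z : Regex α) : Prop :=
  ∀ i j, Matches w Z i j → i = j

theorem zeroWidth_la (A : Regex α) : ZeroWidth w (.la A) :=
  fun _ _ h => h.1

theorem zeroWidth_lb (B : Regex α) : ZeroWidth w (.lb B) :=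
  fun _ _ h => h.1

theorem ZeroWidth.cat {Z Z' : Regex α} (hZ : ZeroWidth w Z) (hZ' : ZeroWidth w Z') :
    ZeroWidth w (.cat Z Z') := by
  rintro i j ⟨k, -, -, hik, hkj⟩
  rw [hZ i k hik, hZ' k j hkj]

theorem matches_inter_iff (L R : Regex α) (i j : ℕ) :
    Matches w (.inter L R) i j ↔ Matches w L i j ∧ Matches w R i j :=
  Iff.rfl

theorem ZeroWidth.matches_cat_left_iff {Z : Regex α} (hZ : ZeroWidth w Z) (R : Regex α)
    (i j : ℕ) : Matches w (.cat Z R) i j ↔ Matches w Z i i ∧ i ≤ j ∧ Matches w R i j := by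
  constructor
  · rintro ⟨k, -, hkj, hik, hR⟩
    obtain rfl := hZ i k hik
    exact ⟨hik, hkj, hR⟩
  · rintro ⟨hZi, hij, hR⟩
    exact ⟨i, le_rfl, hij, hZi, hR⟩

theorem ZeroWidth.matches_cat_right_iff {Z : Regex α} (hZ : ZeroWidth w Z) (R : Regex α)
    (i j : ℕ) : Matches w (.cat R Z) i j ↔ i ≤ j ∧ Matches w R i j ∧ Matches w Z j j := by
  constructor
  · rintro ⟨k, hik, -, hR, hkj⟩
    obtain rfl := hZ k j hkj
    exact ⟨hik, hR, hkj⟩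
  · rintro ⟨hij, hR, hZj⟩
    exact ⟨j, hij, le_rfl, hR, hZj⟩

end Regex

/-- ((?<=B₁)·E₁·(?=A₁)) & ((?<=B₂)·E₂·(?=A₂)) ≡ (?<=B₁)·(?<=B₂)·(E₁&E₂)·(?=A₁)·(?=A₂) -/
theorem inter_lookaround_sandwich {α : Type} (A₁ A₂ B₁ B₂ E₁ E₂ : Regex α)
    (w : List α) (i j : ℕ) :
    Matches w (.inter (.cat (.lb B₁) (.cat E₁ (.la A₁)))
                      (.cat (.lb B₂) (.cat E₂ (.la A₂)))) i j ↔
      Matches w (.cat (.lb B₁) (.cat (.lb B₂)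
                  (.cat (.inter E₁ E₂) (.cat (.la A₁) (.la A₂))))) i j := by
  simp only [Regex.matches_inter_iff, (Regex.zeroWidth_lb _).matches_cat_left_iff,
    (Regex.zeroWidth_la _).matches_cat_right_iff,
    ((Regex.zeroWidth_la A₁).cat (Regex.zeroWidth_la A₂)).matches_cat_right_iff]
  tauto
end

section
/- Soundness of the loop-merging rewrite: for every regex R and bounds l ≤ k ≤ m ≤ n (with m possibly infinite), the union R{l,m} | R{k,n} is semantically equivalent to R{l,max(m,n)}, where R{a,b} denotes between a and b concatenated copies of R. -/
/-- `LoopMatches w R l b i j`: (i,j) matches R{l,b}, i.e., between l and b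
(b possibly ∞) concatenated copies of R. -/
def LoopMatches {α : Type} (w : List α) (R : Regex α) (l : ℕ) (b : ℕ∞) (i j : ℕ) : Prop :=
  ∃ c : ℕ, l ≤ c ∧ (c : ℕ∞) ≤ b ∧ powMatches (Matches w R) c i j

open Set

theorem Set.Icc_union_Icc_of_le_of_le {β : Type*} [LinearOrder β] {a b c d : β}
    (hac : a ≤ c) (hcb : c ≤ b) : Icc a b ∪ Icc c d = Icc a (max b d) := by
  rcases le_total d b with hdb | hbd
  · rw [max_eq_left hdb, union_eq_left.2 (Icc_subset_Icc hac hdb)]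
  · rw [Icc_union_Icc' hcb ((hac.trans hcb).trans hbd), min_eq_left hac]

theorem loopMatches_iff_exists_mem_Icc {α : Type} (w : List α) (R : Regex α) (l : ℕ) (b : ℕ∞)
    (i j : ℕ) :
    LoopMatches w R l b i j ↔
      ∃ c : ℕ, (c : ℕ∞) ∈ Icc (l : ℕ∞) b ∧ powMatches (Matches w R) c i j := by
  simp only [LoopMatches, mem_Icc, Nat.cast_le, and_assoc]

/-- Loop merging: if l ≤ k ≤ m then R{l,m} | R{k,n} ≡ R{l,max(m,n)}. -/
theorem loop_merge {α : Type} (w : List α) (R : Regex α) (l k : ℕ) (m n : ℕ∞)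
    (hlk : l ≤ k) (hkm : (k : ℕ∞) ≤ m) (i j : ℕ) :
    (LoopMatches w R l m i j ∨ LoopMatches w R k n i j) ↔
      LoopMatches w R l (max m n) i j := by
  simp only [loopMatches_iff_exists_mem_Icc, ← exists_or, ← or_and_right, ← mem_union,
    Icc_union_Icc_of_le_of_le (Nat.cast_le.2 hlk) hkm]
end
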